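/- arXiv:0712.1157 — 3 statements merged into one kernel-verified Lean document; each statement's English description precedes it below -/
import Mathlib

section
/- Let k ≥ 2 be an integer, γ₁,…,γ_k positive real numbers, and α₁ > α₂ > ⋯ > α_k real numbers. Let ℓ ≥ 3 be an integer, 0 < t₁ < ⋯ < t_ℓ real numbers, and (u_n)_{n∈ℕ} a sequence of real numbers for which there exists m > 0 with u_n ≥ m for all n. Then there exists a constant C > 0, not depending on n, such that for every n: inf over (α,β) ∈ ℝ² of ∑_{i=1}^ℓ |f_{α,β}(log(u_n) + t_i)|² ≥ C · min(1, u_n^{2(α₂−α₁)}). -/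
open Finset Real

theorem lagrange {ι : Type*} (s : Finset ι) (w a : ι → ℝ) :
    (1/2) * ∑ i ∈ s, ∑ j ∈ s, w i * w j * (a i - a j) ^ 2
    = (∑ i ∈ s, w i * a i ^ 2) * (∑ i ∈ s, w i) - (∑ i ∈ s, w i * a i) ^ 2 := by
  have key : ∀ i, ∑ j ∈ s, w i * w j * (a i - a j) ^ 2
      = (w i * a i ^ 2) * (∑ j ∈ s, w j) + (w i * a i) * (-2 * ∑ j ∈ s, w j * a j)
        + w i * (∑ j ∈ s, w j * a j ^ 2) := by
    intro i
    simp only [Finset.mul_sum, ← Finset.sum_add_distrib]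
    exact Finset.sum_congr rfl fun j _ => by ring
  rw [Finset.sum_congr rfl fun i _ => key i, Finset.sum_add_distrib, Finset.sum_add_distrib,
    ← Finset.sum_mul, ← Finset.sum_mul, ← Finset.sum_mul]
  ring

section aux
variable {k : ℕ} (γ αs : Fin k → ℝ)

noncomputable def Sf (x : ℝ) : ℝ := ∑ q, γ q * Real.exp (αs q * x)
noncomputable def Sf1 (x : ℝ) : ℝ := ∑ q, γ q * αs q * Real.exp (αs q * x)
noncomputable def Sf2 (x : ℝ) : ℝ := ∑ q, γ q * αs q ^ 2 * Real.exp (αs q * x)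

theorem num_lb (hk : 2 ≤ k) (hγ : ∀ q, 0 < γ q) (x : ℝ) :
    (γ ⟨0, by omega⟩ * Real.exp (αs ⟨0, by omega⟩ * x)) * (γ ⟨1, by omega⟩ *
      Real.exp (αs ⟨1, by omega⟩ * x)) * (αs ⟨0, by omega⟩ - αs ⟨1, by omega⟩) ^ 2
      ≤ Sf2 γ αs x * Sf γ αs x - Sf1 γ αs x ^ 2 := by
  set q0 : Fin k := ⟨0, by omega⟩
  set q1 : Fin k := ⟨1, by omega⟩
  set w : Fin k → ℝ := fun q => γ q * Real.exp (αs q * x) with hw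
  have hiden : Sf2 γ αs x * Sf γ αs x - Sf1 γ αs x ^ 2
      = (1/2) * ∑ i, ∑ j, w i * w j * (αs i - αs j) ^ 2 := by
    rw [lagrange]
    unfold Sf Sf1 Sf2
    congr 2
    · exact Finset.sum_congr rfl fun q _ => by rw [hw]; ring
    · exact Finset.sum_congr rfl fun q _ => by rw [hw]; ring
  rw [hiden]
  have hnn : ∀ i j : Fin k, 0 ≤ w i * w j * (αs i - αs j) ^ 2 := fun i j =>
    mul_nonneg (mul_nonneg (mul_pos (hγ i) (Real.exp_pos _)).le
      (mul_pos (hγ j) (Real.exp_pos _)).le) (sq_nonneg _)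
  have h01 : q0 ≠ q1 := by simp [q0, q1, Fin.ext_iff]
  have hpair : ∑ i ∈ ({q0, q1} : Finset (Fin k)), (∑ j, w i * w j * (αs i - αs j) ^ 2)
      ≤ ∑ i, ∑ j, w i * w j * (αs i - αs j) ^ 2 :=
    Finset.sum_le_sum_of_subset_of_nonneg (Finset.subset_univ _)
      (fun i _ _ => Finset.sum_nonneg fun j _ => hnn i j)
  rw [Finset.sum_pair h01] at hpair
  have h0 : w q0 * w q1 * (αs q0 - αs q1) ^ 2 ≤ ∑ j, w q0 * w j * (αs q0 - αs j) ^ 2 :=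
    Finset.single_le_sum (fun j _ => hnn q0 j) (mem_univ q1)
  have h1 : w q1 * w q0 * (αs q1 - αs q0) ^ 2 ≤ ∑ j, w q1 * w j * (αs q1 - αs j) ^ 2 :=
    Finset.single_le_sum (fun j _ => hnn q1 j) (mem_univ q0)
  have e1 : w q1 * w q0 * (αs q1 - αs q0) ^ 2 = w q0 * w q1 * (αs q0 - αs q1) ^ 2 := by ring
  rw [e1] at h1
  have e0 : (γ q0 * Real.exp (αs q0 * x)) * (γ q1 * Real.exp (αs q1 * x)) * (αs q0 - αs q1) ^ 2
      = w q0 * w q1 * (αs q0 - αs q1) ^ 2 := rfl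
  rw [e0]
  linarith


noncomputable def gf (x : ℝ) : ℝ := Real.log (Sf γ αs x)
noncomputable def gf1 (x : ℝ) : ℝ := Sf1 γ αs x / Sf γ αs x
noncomputable def gf2 (x : ℝ) : ℝ :=
  (Sf2 γ αs x * Sf γ αs x - Sf1 γ αs x ^ 2) / Sf γ αs x ^ 2

theorem Sf_pos (hk : 1 ≤ k) (hγ : ∀ q, 0 < γ q) (x : ℝ) : 0 < Sf γ αs x := by
  have h : (Finset.univ : Finset (Fin k)).Nonempty := ⟨⟨0, by omega⟩, mem_univ _⟩
  exact Finset.sum_pos (fun q _ => mul_pos (hγ q) (Real.exp_pos _)) h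

theorem hasDerivAt_Sf (x : ℝ) : HasDerivAt (Sf γ αs) (Sf1 γ αs x) x := by
  apply HasDerivAt.fun_sum
  intro q _
  have h : HasDerivAt (fun x => γ q * Real.exp (αs q * x))
      (γ q * (Real.exp (αs q * x) * (αs q * 1))) x :=
    (((hasDerivAt_id x).const_mul (αs q)).exp).const_mul (γ q)
  refine h.congr_deriv ?_; ring

theorem hasDerivAt_Sf1 (x : ℝ) : HasDerivAt (Sf1 γ αs) (Sf2 γ αs x) x := by
  apply HasDerivAt.fun_sum
  intro q _
  have h : HasDerivAt (fun x => γ q * αs q * Real.exp (αs q * x))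
      (γ q * αs q * (Real.exp (αs q * x) * (αs q * 1))) x :=
    (((hasDerivAt_id x).const_mul (αs q)).exp).const_mul (γ q * αs q)
  refine h.congr_deriv ?_; ring

theorem hasDerivAt_gf (hk : 1 ≤ k) (hγ : ∀ q, 0 < γ q) (x : ℝ) :
    HasDerivAt (gf γ αs) (gf1 γ αs x) x :=
  (hasDerivAt_Sf γ αs x).log (Sf_pos γ αs hk hγ x).ne'

theorem hasDerivAt_gf1 (hk : 1 ≤ k) (hγ : ∀ q, 0 < γ q) (x : ℝ) :
    HasDerivAt (gf1 γ αs) (gf2 γ αs x) x := by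
  have h := (hasDerivAt_Sf1 γ αs x).div (hasDerivAt_Sf γ αs x) (Sf_pos γ αs hk hγ x).ne'
  refine h.congr_deriv ?_
  unfold gf2; ring

theorem gf2_pos (hk : 2 ≤ k) (hγ : ∀ q, 0 < γ q) (hαs : StrictAnti αs) (x : ℝ) :
    0 < gf2 γ αs x := by
  have hq01 : (⟨0, by omega⟩ : Fin k) < ⟨1, by omega⟩ := by simp [Fin.lt_def]
  have hδ : αs ⟨1, by omega⟩ < αs ⟨0, by omega⟩ := hαs hq01
  have h := num_lb γ αs hk hγ x
  apply div_pos _ (pow_pos (Sf_pos γ αs (by omega) hγ x) 2)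
  refine lt_of_lt_of_le ?_ h
  have := Real.exp_pos (αs (⟨0, by omega⟩ : Fin k) * x)
  have := Real.exp_pos (αs (⟨1, by omega⟩ : Fin k) * x)
  exact mul_pos (mul_pos (mul_pos (hγ _) (Real.exp_pos _)) (mul_pos (hγ _) (Real.exp_pos _)))
    (pow_pos (sub_pos.2 hδ) 2)

theorem gf1_strictMono (hk : 2 ≤ k) (hγ : ∀ q, 0 < γ q) (hαs : StrictAnti αs) :
    StrictMono (gf1 γ αs) := by
  apply strictMono_of_deriv_pos
  intro x
  rw [(hasDerivAt_gf1 γ αs (by omega) hγ x).deriv]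
  exact gf2_pos γ αs hk hγ hαs x

theorem Sf_ub (hk : 2 ≤ k) (hγ : ∀ q, 0 < γ q) (hαs : StrictAnti αs) (L x : ℝ) (hx : L ≤ x) :
    Sf γ αs x ≤ (∑ q, γ q * Real.exp ((αs q - αs ⟨0, by omega⟩) * L)) *
      Real.exp (αs ⟨0, by omega⟩ * x) := by
  set q0 : Fin k := ⟨0, by omega⟩
  rw [Finset.sum_mul]
  apply Finset.sum_le_sum
  intro q _
  rw [mul_assoc, ← Real.exp_add]
  apply mul_le_mul_of_nonneg_left _ (hγ q).le
  apply Real.exp_le_exp.2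
  have hq : αs q ≤ αs q0 := hαs.antitone (by simp [q0, Fin.le_def])
  nlinarith [mul_le_mul_of_nonpos_left hx (sub_nonpos.2 hq)]

theorem gf2_lb (hk : 2 ≤ k) (hγ : ∀ q, 0 < γ q) (hαs : StrictAnti αs) (L x : ℝ) (hx : L ≤ x) :
    γ ⟨0, by omega⟩ * γ ⟨1, by omega⟩ * (αs ⟨0, by omega⟩ - αs ⟨1, by omega⟩) ^ 2 /
        (∑ q, γ q * Real.exp ((αs q - αs ⟨0, by omega⟩) * L)) ^ 2 *
        Real.exp ((αs ⟨1, by omega⟩ - αs ⟨0, by omega⟩) * x)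
      ≤ gf2 γ αs x := by
  set q0 : Fin k := ⟨0, by omega⟩
  set q1 : Fin k := ⟨1, by omega⟩
  set K := ∑ q, γ q * Real.exp ((αs q - αs q0) * L) with hK
  have hKpos : 0 < K :=
    Finset.sum_pos (fun q _ => mul_pos (hγ q) (Real.exp_pos _)) ⟨q0, mem_univ _⟩
  have hN := num_lb γ αs hk hγ x
  have hSpos := Sf_pos γ αs (by omega) hγ x
  have hSub := Sf_ub γ αs hk hγ hαs L x hx
  have hA : 0 < (γ q0 * Real.exp (αs q0 * x)) * (γ q1 * Real.exp (αs q1 * x)) *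
      (αs q0 - αs q1) ^ 2 := by
    have hδ : αs q1 < αs q0 := hαs (by simp [q0, q1, Fin.lt_def])
    exact mul_pos (mul_pos (mul_pos (hγ _) (Real.exp_pos _)) (mul_pos (hγ _) (Real.exp_pos _)))
      (pow_pos (sub_pos.2 hδ) 2)
  have hid : γ q0 * γ q1 * (αs q0 - αs q1) ^ 2 / K ^ 2 * Real.exp ((αs q1 - αs q0) * x)
      = (γ q0 * Real.exp (αs q0 * x)) * (γ q1 * Real.exp (αs q1 * x)) * (αs q0 - αs q1) ^ 2
        / (K * Real.exp (αs q0 * x)) ^ 2 := by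
    rw [sub_mul, Real.exp_sub]
    field_simp
  rw [hid]
  unfold gf2
  apply div_le_div₀ (le_trans hA.le hN) hN (pow_pos hSpos 2)
  exact pow_le_pow_left₀ hSpos.le hSub 2

end aux

theorem second_diff_lb (g g1 g2 : ℝ → ℝ)
    (hg : ∀ x, HasDerivAt g (g1 x) x) (hg1 : ∀ x, HasDerivAt g1 (g2 x) x)
    (hmono : Monotone g1)
    {x1 x2 x3 : ℝ} (h12 : x1 < x2) (h23 : x2 < x3)
    {c : ℝ} (hc : ∀ y, x1 ≤ y → y ≤ x3 → c ≤ g2 y) :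
    (x3 - x2) * (x2 - x1) * (x3 - x1) / 4 * c
      ≤ (x3 - x2) * g x1 - (x3 - x1) * g x2 + (x2 - x1) * g x3 := by
  have hgc : ∀ a b : ℝ, ContinuousOn g (Set.Icc a b) :=
    fun a b y _ => (hg y).continuousAt.continuousWithinAt
  have hg1c : ∀ a b : ℝ, ContinuousOn g1 (Set.Icc a b) :=
    fun a b y _ => (hg1 y).continuousAt.continuousWithinAt
  obtain ⟨p, hp, hpe⟩ := exists_hasDerivAt_eq_slope g g1 (show x1 < (x1+x2)/2 by linarith)
    (hgc _ _) (fun y _ => hg y)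
  obtain ⟨q, hq, hqe⟩ := exists_hasDerivAt_eq_slope g g1 (show (x1+x2)/2 < x2 by linarith)
    (hgc _ _) (fun y _ => hg y)
  obtain ⟨r, hr, hre⟩ := exists_hasDerivAt_eq_slope g g1 (show x2 < (x2+x3)/2 by linarith)
    (hgc _ _) (fun y _ => hg y)
  obtain ⟨s, hs, hse⟩ := exists_hasDerivAt_eq_slope g g1 (show (x2+x3)/2 < x3 by linarith)
    (hgc _ _) (fun y _ => hg y)
  obtain ⟨η, hη, hηe⟩ := exists_hasDerivAt_eq_slope g1 g2
    (show (x1+x2)/2 < (x2+x3)/2 by linarith) (hg1c _ _) (fun y _ => hg1 y)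
  have h1 : g1 p ≤ g1 ((x1+x2)/2) := hmono (le_of_lt hp.2)
  have h2 : g1 ((x2+x3)/2) ≤ g1 s := hmono (le_of_lt hs.1)
  have h3 : g1 q ≤ g1 r := hmono (le_trans (le_of_lt hq.2) (le_of_lt hr.1))
  have h4 : g1 ((x2+x3)/2) - g1 ((x1+x2)/2) = g2 η * ((x2+x3)/2 - (x1+x2)/2) := by
    rw [hηe, div_mul_cancel₀]; exact ne_of_gt (by linarith)
  have hcη : c ≤ g2 η := hc η (by linarith [hη.1]) (by linarith [hη.2])
  have e1 : g ((x1+x2)/2) - g x1 = g1 p * ((x1+x2)/2 - x1) := by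
    rw [hpe, div_mul_cancel₀]; exact ne_of_gt (by linarith)
  have e2 : g x2 - g ((x1+x2)/2) = g1 q * (x2 - (x1+x2)/2) := by
    rw [hqe, div_mul_cancel₀]; exact ne_of_gt (by linarith)
  have e3 : g ((x2+x3)/2) - g x2 = g1 r * ((x2+x3)/2 - x2) := by
    rw [hre, div_mul_cancel₀]; exact ne_of_gt (by linarith)
  have e4 : g x3 - g ((x2+x3)/2) = g1 s * (x3 - (x2+x3)/2) := by
    rw [hse, div_mul_cancel₀]; exact ne_of_gt (by linarith)
  have hmul : c * ((x3-x1)/2) ≤ g2 η * ((x3-x1)/2) :=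
    mul_le_mul_of_nonneg_right hcη (by linarith)
  have h4' : g1 ((x2+x3)/2) - g1 ((x1+x2)/2) = g2 η * ((x3-x1)/2) := by
    rw [h4]; ring
  have key : c * ((x3-x1)/2) ≤ g1 r + g1 s - g1 p - g1 q := by linarith
  have hΔ : (x3 - x2) * g x1 - (x3 - x1) * g x2 + (x2 - x1) * g x3
      = (x2-x1)*(x3-x2)/2 * (g1 r + g1 s - g1 p - g1 q) := by
    linear_combination (x2-x1)*(e3 + e4) - (x3-x2)*(e1 + e2)
  rw [hΔ]
  have hpos : 0 ≤ (x2-x1)*(x3-x2)/2 := by nlinarith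
  calc (x3 - x2) * (x2 - x1) * (x3 - x1) / 4 * c
      = (x2-x1)*(x3-x2)/2 * (c * ((x3-x1)/2)) := by ring
    _ ≤ (x2-x1)*(x3-x2)/2 * (g1 r + g1 s - g1 p - g1 q) :=
        mul_le_mul_of_nonneg_left key hpos


/-- The function `f_{α,β}(x) = α·x + β − log(∑ γ_q exp(α_q x))`. -/
noncomputable def f {k : ℕ} (γ αs : Fin k → ℝ) (a b : ℝ) (x : ℝ) : ℝ :=
  a * x + b - Real.log (∑ q, γ q * Real.exp (αs q * x))

set_option maxHeartbeats 2000000 in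
theorem stmt_0 {k : ℕ} (hk : 2 ≤ k) (γ αs : Fin k → ℝ)
    (hγ : ∀ q, 0 < γ q) (hαs : StrictAnti αs)
    {ℓ : ℕ} (hℓ : 3 ≤ ℓ) (t : Fin ℓ → ℝ) (ht : StrictMono t)
    (ht0 : 0 < t ⟨0, by omega⟩)
    (u : ℕ → ℝ) (m : ℝ) (hm : 0 < m) (hum : ∀ n, m ≤ u n) :
    ∃ C : ℝ, 0 < C ∧ ∀ n : ℕ, ∀ a b : ℝ,
      C * min 1 (u n ^ (2 * (αs ⟨1, by omega⟩ - αs ⟨0, by omega⟩)))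
        ≤ ∑ i, (f γ αs a b (Real.log (u n) + t i)) ^ 2 := by
  classical
  have hk1 : 1 ≤ k := by omega
  set q0 : Fin k := ⟨0, by omega⟩ with hq0
  set q1 : Fin k := ⟨1, by omega⟩ with hq1
  have hq01 : q0 < q1 := by simp [hq0, hq1, Fin.lt_def]
  have hδ : 0 < αs q0 - αs q1 := sub_pos.2 (hαs hq01)
  set L := Real.log m with hLdef
  set K := ∑ q, γ q * Real.exp ((αs q - αs q0) * L) with hKdef
  have hKpos : 0 < K :=
    Finset.sum_pos (fun q _ => mul_pos (hγ q) (Real.exp_pos _)) ⟨q0, Finset.mem_univ _⟩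
  set c0 := γ q0 * γ q1 * (αs q0 - αs q1) ^ 2 / K ^ 2 with hc0def
  have hc0 : 0 < c0 :=
    div_pos (mul_pos (mul_pos (hγ _) (hγ _)) (pow_pos hδ 2)) (pow_pos hKpos 2)
  set i0 : Fin ℓ := ⟨0, by omega⟩ with hi0
  set i1 : Fin ℓ := ⟨1, by omega⟩ with hi1
  set i2 : Fin ℓ := ⟨2, by omega⟩ with hi2
  have ht01 : t i0 < t i1 := ht (by simp [hi0, hi1, Fin.lt_def])
  have ht12 : t i1 < t i2 := ht (by simp [hi1, hi2, Fin.lt_def])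
  have ht0' : 0 < t i0 := ht0
  set c1 := (t i2 - t i1) * (t i1 - t i0) * (t i2 - t i0) / 4 *
      (c0 * Real.exp ((αs q1 - αs q0) * t i2)) with hc1def
  have hc1 : 0 < c1 := by
    apply mul_pos _ (mul_pos hc0 (Real.exp_pos _))
    have h : 0 < (t i2 - t i1) * (t i1 - t i0) * (t i2 - t i0) := by
      apply mul_pos (mul_pos _ _) <;> linarith
    linarith
  set W := 3 * (t i2 - t i0) ^ 2 with hWdef
  have hWpos : 0 < W := by
    have h : 0 < t i2 - t i0 := by linarith
    rw [hWdef]; positivity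
  refine ⟨c1 ^ 2 / W, div_pos (pow_pos hc1 2) hWpos, ?_⟩
  intro n a b
  have hu : 0 < u n := lt_of_lt_of_le hm (hum n)
  set X := Real.log (u n) with hXdef
  have hLX : L ≤ X := Real.log_le_log hm (hum n)
  have h12 : X + t i0 < X + t i1 := by linarith
  have h23 : X + t i1 < X + t i2 := by linarith
  have hLx1 : L ≤ X + t i0 := by linarith
  have hmono : Monotone (gf1 γ αs) := (gf1_strictMono γ αs hk hγ hαs).monotone
  have hcbound : ∀ y, X + t i0 ≤ y → y ≤ X + t i2 →
      c0 * Real.exp ((αs q1 - αs q0) * (X + t i2)) ≤ gf2 γ αs y := by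
    intro y hy1 hy3
    refine le_trans ?_ (gf2_lb γ αs hk hγ hαs L y (le_trans hLx1 hy1))
    have hle : (αs q1 - αs q0) * (X + t i2) ≤ (αs q1 - αs q0) * y :=
      mul_le_mul_of_nonpos_left hy3 (by linarith)
    exact mul_le_mul_of_nonneg_left (Real.exp_le_exp.2 hle) hc0.le
  have hΔ := second_diff_lb (gf γ αs) (gf1 γ αs) (gf2 γ αs)
      (hasDerivAt_gf γ αs hk1 hγ) (hasDerivAt_gf1 γ αs hk1 hγ) hmono h12 h23 hcbound
  -- notation
  set F0 := f γ αs a b (X + t i0) with hF0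
  set F1 := f γ αs a b (X + t i1) with hF1
  set F2 := f γ αs a b (X + t i2) with hF2
  set D := ((X + t i2) - (X + t i1)) * ((X + t i1) - (X + t i0)) *
      ((X + t i2) - (X + t i0)) / 4 * (c0 * Real.exp ((αs q1 - αs q0) * (X + t i2))) with hDdef
  have hDeq : D = c1 * Real.exp ((αs q1 - αs q0) * X) := by
    rw [hDdef, hc1def, mul_add, Real.exp_add]
    ring
  have hDpos : 0 < D := by rw [hDeq]; exact mul_pos hc1 (Real.exp_pos _)
  have hE : ((X + t i2) - (X + t i1)) * gf γ αs (X + t i0)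
      - ((X + t i2) - (X + t i0)) * gf γ αs (X + t i1)
      + ((X + t i1) - (X + t i0)) * gf γ αs (X + t i2)
      = -(((X + t i2) - (X + t i1)) * F0 - ((X + t i2) - (X + t i0)) * F1
        + ((X + t i1) - (X + t i0)) * F2) := by
    rw [hF0, hF1, hF2]; unfold f gf Sf; ring
  have hDle : D ≤ -(((X + t i2) - (X + t i1)) * F0 - ((X + t i2) - (X + t i0)) * F1
      + ((X + t i1) - (X + t i0)) * F2) := by
    rw [← hE]; exact hΔ
  have habs : D ≤ (t i2 - t i0) * (|F0| + |F1| + |F2|) := by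
    have c0le : (X + t i2) - (X + t i1) ≤ t i2 - t i0 := by linarith
    have c1le : (X + t i2) - (X + t i0) ≤ t i2 - t i0 := by linarith
    have m0 : ((X + t i2) - (X + t i1)) * (-F0) ≤ ((X + t i2) - (X + t i1)) * |F0| :=
      mul_le_mul_of_nonneg_left (neg_le_abs F0) (by linarith)
    have m1 : ((X + t i2) - (X + t i0)) * F1 ≤ ((X + t i2) - (X + t i0)) * |F1| :=
      mul_le_mul_of_nonneg_left (le_abs_self F1) (by linarith)
    have m2 : ((X + t i1) - (X + t i0)) * (-F2) ≤ ((X + t i1) - (X + t i0)) * |F2| :=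
      mul_le_mul_of_nonneg_left (neg_le_abs F2) (by linarith)
    have n0 : ((X + t i2) - (X + t i1)) * |F0| ≤ (t i2 - t i0) * |F0| :=
      mul_le_mul_of_nonneg_right c0le (abs_nonneg _)
    have n1 : ((X + t i2) - (X + t i0)) * |F1| ≤ (t i2 - t i0) * |F1| :=
      mul_le_mul_of_nonneg_right c1le (abs_nonneg _)
    have n2 : ((X + t i1) - (X + t i0)) * |F2| ≤ (t i2 - t i0) * |F2| :=
      mul_le_mul_of_nonneg_right (by linarith : (X + t i1) - (X + t i0) ≤ t i2 - t i0)
        (abs_nonneg _)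
    have expand : -(((X + t i2) - (X + t i1)) * F0 - ((X + t i2) - (X + t i0)) * F1
        + ((X + t i1) - (X + t i0)) * F2)
        = ((X + t i2) - (X + t i1)) * (-F0) + ((X + t i2) - (X + t i0)) * F1
          + ((X + t i1) - (X + t i0)) * (-F2) := by ring
    have goal2 : (t i2 - t i0) * (|F0| + |F1| + |F2|)
        = (t i2 - t i0) * |F0| + (t i2 - t i0) * |F1| + (t i2 - t i0) * |F2| := by ring
    rw [goal2]
    rw [expand] at hDle
    linarith
  have hA2 : (|F0| + |F1| + |F2|) ^ 2 ≤ 3 * (F0 ^ 2 + F1 ^ 2 + F2 ^ 2) := by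
    nlinarith [sq_nonneg (|F0| - |F1|), sq_nonneg (|F0| - |F2|), sq_nonneg (|F1| - |F2|),
      sq_abs F0, sq_abs F1, sq_abs F2]
  have hsq : D ^ 2 ≤ W * (F0 ^ 2 + F1 ^ 2 + F2 ^ 2) := by
    have h1 : D ^ 2 ≤ ((t i2 - t i0) * (|F0| + |F1| + |F2|)) ^ 2 :=
      pow_le_pow_left₀ hDpos.le habs 2
    have h2 : ((t i2 - t i0) * (|F0| + |F1| + |F2|)) ^ 2
        = (t i2 - t i0) ^ 2 * (|F0| + |F1| + |F2|) ^ 2 := by ring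
    have h3 : (t i2 - t i0) ^ 2 * (|F0| + |F1| + |F2|) ^ 2
        ≤ (t i2 - t i0) ^ 2 * (3 * (F0 ^ 2 + F1 ^ 2 + F2 ^ 2)) :=
      mul_le_mul_of_nonneg_left hA2 (sq_nonneg (t i2 - t i0))
    have h4 : W * (F0 ^ 2 + F1 ^ 2 + F2 ^ 2)
        = (t i2 - t i0) ^ 2 * (3 * (F0 ^ 2 + F1 ^ 2 + F2 ^ 2)) := by rw [hWdef]; ring
    linarith
  -- sum bound
  have hne01 : i0 ≠ i1 := by simp [hi0, hi1, Fin.ext_iff]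
  have hne02 : i0 ≠ i2 := by simp [hi0, hi2, Fin.ext_iff]
  have hne12 : i1 ≠ i2 := by simp [hi1, hi2, Fin.ext_iff]
  have hsum3 : F0 ^ 2 + F1 ^ 2 + F2 ^ 2 ≤ ∑ i, (f γ αs a b (X + t i)) ^ 2 := by
    have hsub : ∑ i ∈ ({i0, i1, i2} : Finset (Fin ℓ)), (f γ αs a b (X + t i)) ^ 2
        ≤ ∑ i, (f γ αs a b (X + t i)) ^ 2 :=
      Finset.sum_le_sum_of_subset_of_nonneg (Finset.subset_univ _)
        (fun i _ _ => sq_nonneg _)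
    rw [Finset.sum_insert (by simp [hne01, hne02]), Finset.sum_pair hne12] at hsub
    rw [hF0, hF1, hF2]
    linarith
  -- final
  have hmin : min 1 (u n ^ (2 * (αs q1 - αs q0)))
      ≤ Real.exp ((αs q1 - αs q0) * X) ^ 2 := by
    have : u n ^ (2 * (αs q1 - αs q0)) = Real.exp ((αs q1 - αs q0) * X) ^ 2 := by
      rw [Real.rpow_def_of_pos hu, sq, ← Real.exp_add, ← hXdef]
      congr 1; ring
    rw [← this]
    exact min_le_right _ _
  calc c1 ^ 2 / W * min 1 (u n ^ (2 * (αs q1 - αs q0)))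
      ≤ c1 ^ 2 / W * Real.exp ((αs q1 - αs q0) * X) ^ 2 :=
        mul_le_mul_of_nonneg_left hmin (by positivity)
    _ = D ^ 2 / W := by rw [hDeq]; ring
    _ ≤ F0 ^ 2 + F1 ^ 2 + F2 ^ 2 := by
        rw [div_le_iff₀ hWpos]
        linarith [hsq]
    _ ≤ ∑ i, (f γ αs a b (X + t i)) ^ 2 := hsum3
end

section
/- Let k ≥ 2 be an integer, γ₁,…,γ_k positive real numbers, and α₁ > α₂ > ⋯ > α_k real numbers. Let ℓ ≥ 3 be an integer and t₁ < t₂ < ⋯ < t_ℓ be distinct real numbers. Then for every x ∈ ℝ there exists a constant C(x) > 0, not depending on α and β, such that inf over (α,β) ∈ ℝ² of ∑_{i=1}^ℓ |f_{α,β}(x + t_i)|² ≥ C(x). -/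
/-- Strict two-point weighted AM-GM. -/
lemma strict_amgm {w1 w2 a b : ℝ} (hw1 : 0 < w1) (hw2 : 0 < w2) (hw : w1 + w2 = 1)
    (ha : 0 < a) (hb : 0 < b) (hab : a ≠ b) :
    a ^ w1 * b ^ w2 < w1 * a + w2 * b := by
  have h := strictConcaveOn_log_Ioi.2 (Set.mem_Ioi.2 ha) (Set.mem_Ioi.2 hb) hab hw1 hw2 hw
  rw [smul_eq_mul, smul_eq_mul, smul_eq_mul, smul_eq_mul] at h
  have heq : a ^ w1 * b ^ w2 = Real.exp (w1 * Real.log a + w2 * Real.log b) := by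
    rw [Real.rpow_def_of_pos ha, Real.rpow_def_of_pos hb, ← Real.exp_add]
    congr 1; ring
  rw [heq]
  calc Real.exp (w1 * Real.log a + w2 * Real.log b)
      < Real.exp (Real.log (w1 * a + w2 * b)) := Real.exp_lt_exp.2 h
    _ = w1 * a + w2 * b := Real.exp_log (by positivity)

set_option maxHeartbeats 1000000 in
theorem stmt_3 {k : ℕ} (hk : 2 ≤ k) (γ αs : Fin k → ℝ)
    (hγ : ∀ q, 0 < γ q) (hαs : StrictAnti αs)
    {ℓ : ℕ} (hℓ : 3 ≤ ℓ) (t : Fin ℓ → ℝ) (ht : StrictMono t) (x : ℝ) :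
    ∃ C : ℝ, 0 < C ∧ ∀ a b : ℝ,
      C ≤ ∑ i, (f γ αs a b (x + t i)) ^ 2 := by
  -- the three points
  set i0 : Fin ℓ := ⟨0, by omega⟩ with hi0
  set i1 : Fin ℓ := ⟨1, by omega⟩ with hi1
  set i2 : Fin ℓ := ⟨2, by omega⟩ with hi2
  set u0 : ℝ := x + t i0 with hu0
  set u1 : ℝ := x + t i1 with hu1
  set u2 : ℝ := x + t i2 with hu2
  have h01 : u0 < u1 := by
    have := ht (show i0 < i1 by simp [hi0, hi1, Fin.lt_def]); simpa [hu0, hu1]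
  have h12 : u1 < u2 := by
    have := ht (show i1 < i2 by simp [hi1, hi2, Fin.lt_def]); simpa [hu1, hu2]
  have h02 : u0 < u2 := h01.trans h12
  -- the weights
  set w1 : ℝ := (u2 - u1) / (u2 - u0) with hw1def
  set w2 : ℝ := (u1 - u0) / (u2 - u0) with hw2def
  have hd : (0:ℝ) < u2 - u0 := by linarith
  have hw1 : 0 < w1 := div_pos (by linarith) hd
  have hw2 : 0 < w2 := div_pos (by linarith) hd
  have hwsum : w1 + w2 = 1 := by
    rw [hw1def, hw2def, ← add_div, div_eq_one_iff_eq hd.ne']; ring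
  have hwcomb : w1 * u0 + w2 * u2 = u1 := by
    rw [hw1def, hw2def]; field_simp; ring
  -- the log-sum-exp function
  set S : ℝ → ℝ := fun u => ∑ q, γ q * Real.exp (αs q * u) with hSdef
  have hS : ∀ u, 0 < S u := fun u => Finset.sum_pos
    (fun q _ => mul_pos (hγ q) (Real.exp_pos _))
    (Finset.univ_nonempty_iff.2 ⟨⟨0, by omega⟩⟩)
  -- normalized vectors
  set A : Fin k → ℝ := fun q => γ q * Real.exp (αs q * u0) / S u0 with hAdef
  set B : Fin k → ℝ := fun q => γ q * Real.exp (αs q * u2) / S u2 with hBdef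
  have hA : ∀ q, 0 < A q := fun q => div_pos (mul_pos (hγ q) (Real.exp_pos _)) (hS u0)
  have hB : ∀ q, 0 < B q := fun q => div_pos (mul_pos (hγ q) (Real.exp_pos _)) (hS u2)
  have hAsum : ∑ q, A q = 1 := by
    simp only [hAdef]
    rw [← Finset.sum_div, div_eq_one_iff_eq (hS u0).ne']
  have hBsum : ∑ q, B q = 1 := by
    simp only [hBdef]
    rw [← Finset.sum_div, div_eq_one_iff_eq (hS u2).ne']
  -- the key pointwise identity
  have hpt : ∀ q, γ q * Real.exp (αs q * u1)
      = (S u0 ^ w1 * S u2 ^ w2) * (A q ^ w1 * B q ^ w2) := by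
    intro q
    have e1 : A q ^ w1 = Real.exp (w1 * Real.log (A q)) := by
      rw [Real.rpow_def_of_pos (hA q), mul_comm]
    have e2 : B q ^ w2 = Real.exp (w2 * Real.log (B q)) := by
      rw [Real.rpow_def_of_pos (hB q), mul_comm]
    have e3 : S u0 ^ w1 = Real.exp (w1 * Real.log (S u0)) := by
      rw [Real.rpow_def_of_pos (hS u0), mul_comm]
    have e4 : S u2 ^ w2 = Real.exp (w2 * Real.log (S u2)) := by
      rw [Real.rpow_def_of_pos (hS u2), mul_comm]
    have lA : Real.log (A q) = Real.log (γ q) + αs q * u0 - Real.log (S u0) := by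
      simp only [hAdef]
      rw [Real.log_div (mul_pos (hγ q) (Real.exp_pos _)).ne' (hS u0).ne',
        Real.log_mul (hγ q).ne' (Real.exp_pos _).ne', Real.log_exp]
    have lB : Real.log (B q) = Real.log (γ q) + αs q * u2 - Real.log (S u2) := by
      simp only [hBdef]
      rw [Real.log_div (mul_pos (hγ q) (Real.exp_pos _)).ne' (hS u2).ne',
        Real.log_mul (hγ q).ne' (Real.exp_pos _).ne', Real.log_exp]
    rw [e1, e2, e3, e4, ← Real.exp_add, ← Real.exp_add, ← Real.exp_add, lA, lB]
    have hg : γ q * Real.exp (αs q * u1) = Real.exp (Real.log (γ q) + αs q * u1) := by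
      rw [Real.exp_add, Real.exp_log (hγ q)]
    rw [hg]
    congr 1
    have hcomb' : αs q * u1 = αs q * (w1 * u0) + αs q * (w2 * u2) := by
      rw [← mul_add, hwcomb]
    linear_combination (-Real.log (γ q)) * hwsum + hcomb'
  -- some q where A and B differ
  set q0 : Fin k := ⟨0, by omega⟩ with hq0
  set q1 : Fin k := ⟨1, by omega⟩ with hq1
  have cancel : ∀ q : Fin k, A q = B q →
      Real.exp (αs q * u0) * S u2 = Real.exp (αs q * u2) * S u0 := by
    intro q hq
    simp only [hAdef, hBdef] at hq
    rw [div_eq_div_iff (hS u0).ne' (hS u2).ne'] at hq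
    have := hq
    apply mul_left_cancel₀ (hγ q).ne'
    calc γ q * (Real.exp (αs q * u0) * S u2) = γ q * Real.exp (αs q * u0) * S u2 := by ring
      _ = γ q * Real.exp (αs q * u2) * S u0 := hq
      _ = γ q * (Real.exp (αs q * u2) * S u0) := by ring
  have hne : A q0 ≠ B q0 ∨ A q1 ≠ B q1 := by
    by_contra hcon
    push_neg at hcon
    obtain ⟨e0, e1⟩ := hcon
    have c0 := cancel q0 e0
    have c1 := cancel q1 e1
    have hSS : S u0 * S u2 ≠ 0 := (mul_pos (hS u0) (hS u2)).ne'
    have hprod : (Real.exp (αs q0 * u0) * Real.exp (αs q1 * u2)) * (S u0 * S u2)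
        = (Real.exp (αs q0 * u2) * Real.exp (αs q1 * u0)) * (S u0 * S u2) := by
      linear_combination (Real.exp (αs q1 * u2) * S u0) * c0
        - (Real.exp (αs q0 * u2) * S u0) * c1
    have hexp : Real.exp (αs q0 * u0 + αs q1 * u2) = Real.exp (αs q0 * u2 + αs q1 * u0) := by
      rw [Real.exp_add, Real.exp_add]
      exact mul_right_cancel₀ hSS hprod
    have harg : αs q0 * u0 + αs q1 * u2 = αs q0 * u2 + αs q1 * u0 :=
      Real.exp_injective hexp
    have hlt : αs q1 < αs q0 := hαs (show q0 < q1 by simp [hq0, hq1, Fin.lt_def])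
    nlinarith
  -- strict Hölder
  have hsum_lt : ∑ q, A q ^ w1 * B q ^ w2 < 1 := by
    have hle : ∀ q ∈ Finset.univ, A q ^ w1 * B q ^ w2 ≤ w1 * A q + w2 * B q := by
      intro q _
      rcases eq_or_ne (A q) (B q) with h | h
      · rw [h, ← Real.rpow_add (hB q), hwsum, Real.rpow_one, ← add_mul, hwsum, one_mul]
      · exact (strict_amgm hw1 hw2 hwsum (hA q) (hB q) h).le
    have hlt : ∃ q ∈ Finset.univ, A q ^ w1 * B q ^ w2 < w1 * A q + w2 * B q := by
      rcases hne with h | h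
      · exact ⟨q0, Finset.mem_univ _, strict_amgm hw1 hw2 hwsum (hA q0) (hB q0) h⟩
      · exact ⟨q1, Finset.mem_univ _, strict_amgm hw1 hw2 hwsum (hA q1) (hB q1) h⟩
    calc ∑ q, A q ^ w1 * B q ^ w2 < ∑ q, (w1 * A q + w2 * B q) :=
          Finset.sum_lt_sum hle hlt
      _ = 1 := by
          rw [Finset.sum_add_distrib, ← Finset.mul_sum, ← Finset.mul_sum, hAsum, hBsum]
          simpa using hwsum
  have key : S u1 < S u0 ^ w1 * S u2 ^ w2 := by
    have hSu1 : S u1 = (S u0 ^ w1 * S u2 ^ w2) * ∑ q, A q ^ w1 * B q ^ w2 := by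
      rw [Finset.mul_sum, hSdef]
      exact Finset.sum_congr rfl fun q _ => hpt q
    rw [hSu1]
    have hpos : 0 < S u0 ^ w1 * S u2 ^ w2 :=
      mul_pos (Real.rpow_pos_of_pos (hS u0) _) (Real.rpow_pos_of_pos (hS u2) _)
    calc (S u0 ^ w1 * S u2 ^ w2) * ∑ q, A q ^ w1 * B q ^ w2
        < (S u0 ^ w1 * S u2 ^ w2) * 1 := mul_lt_mul_of_pos_left hsum_lt hpos
      _ = S u0 ^ w1 * S u2 ^ w2 := mul_one _
  -- convexity defect
  obtain ⟨D, hDdef⟩ : ∃ D : ℝ,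
      D = w1 * Real.log (S u0) + w2 * Real.log (S u2) - Real.log (S u1) := ⟨_, rfl⟩
  have hD : 0 < D := by
    have hlog := Real.log_lt_log (hS u1) key
    rw [Real.log_mul (Real.rpow_pos_of_pos (hS u0) _).ne' (Real.rpow_pos_of_pos (hS u2) _).ne',
      Real.log_rpow (hS u0), Real.log_rpow (hS u2)] at hlog
    rw [hDdef]; linarith
  refine ⟨D ^ 2 / 3, div_pos (pow_pos hD 2) (by norm_num), fun a b => ?_⟩
  -- the affine part cancels
  have hf : ∀ u : ℝ, f γ αs a b u = a * u + b - Real.log (S u) := by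
    intro u; rw [hSdef]; rfl
  have hid : f γ αs a b u1 - w1 * f γ αs a b u0 - w2 * f γ αs a b u2 = D := by
    rw [hf u1, hf u0, hf u2, hDdef]
    linear_combination a * hwcomb.symm + b * hwsum.symm
  obtain ⟨F0, hF0⟩ : ∃ F0 : ℝ, F0 = f γ αs a b u0 := ⟨_, rfl⟩
  obtain ⟨F1, hF1⟩ : ∃ F1 : ℝ, F1 = f γ αs a b u1 := ⟨_, rfl⟩
  obtain ⟨F2, hF2⟩ : ∃ F2 : ℝ, F2 = f γ αs a b u2 := ⟨_, rfl⟩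
  have hw1le : w1 ≤ 1 := by linarith
  have hw2le : w2 ≤ 1 := by linarith
  have hDle : D ≤ |F0| + |F1| + |F2| := by
    have hDeq : D = F1 - w1 * F0 - w2 * F2 := by rw [hF0, hF1, hF2]; exact hid.symm
    have p0 : w1 * (-|F0|) ≤ w1 * F0 := mul_le_mul_of_nonneg_left (neg_abs_le F0) hw1.le
    have p0' : 0 ≤ (1 - w1) * |F0| := mul_nonneg (by linarith) (abs_nonneg F0)
    have p2 : w2 * (-|F2|) ≤ w2 * F2 := mul_le_mul_of_nonneg_left (neg_abs_le F2) hw2.le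
    have p2' : 0 ≤ (1 - w2) * |F2| := mul_nonneg (by linarith) (abs_nonneg F2)
    have p1 : F1 ≤ |F1| := le_abs_self F1
    nlinarith [p0, p0', p2, p2', p1]
  have hstep : D ^ 2 / 3 ≤ F0 ^ 2 + F1 ^ 2 + F2 ^ 2 := by
    have habs : 0 ≤ |F0| + |F1| + |F2| := by positivity
    have h1 : D ^ 2 ≤ (|F0| + |F1| + |F2|) ^ 2 := by
      nlinarith [mul_nonneg (by linarith : (0:ℝ) ≤ |F0| + |F1| + |F2| - D)
        (by linarith : (0:ℝ) ≤ |F0| + |F1| + |F2| + D)]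
    have h2 : (|F0| + |F1| + |F2|) ^ 2 ≤ 3 * (F0 ^ 2 + F1 ^ 2 + F2 ^ 2) := by
      nlinarith [sq_nonneg (|F0| - |F1|), sq_nonneg (|F0| - |F2|), sq_nonneg (|F1| - |F2|),
        sq_abs F0, sq_abs F1, sq_abs F2]
    linarith
  refine hstep.trans ?_
  have h01' : i0 ≠ i1 := by simp [hi0, hi1, Fin.ext_iff]
  have h02' : i0 ≠ i2 := by simp [hi0, hi2, Fin.ext_iff]
  have h12' : i1 ≠ i2 := by simp [hi1, hi2, Fin.ext_iff]
  have hsum3 : ∑ i ∈ ({i0, i1, i2} : Finset (Fin ℓ)), (f γ αs a b (x + t i)) ^ 2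
      = F0 ^ 2 + F1 ^ 2 + F2 ^ 2 := by
    rw [Finset.sum_insert (by simp [h01', h02']), Finset.sum_insert (by simp [h12']),
      Finset.sum_singleton, hF0, hF1, hF2, hu0, hu1, hu2]
    ring
  rw [← hsum3]
  exact Finset.sum_le_sum_of_subset_of_nonneg (Finset.subset_univ _) (fun i _ _ => sq_nonneg _)
end

section
/- Let k ≥ 2 be an integer, γ₁,…,γ_k positive real numbers, and α₁ > α₂ > ⋯ > α_k real numbers. Let ℓ ≥ 3 be an integer and t₁ < t₂ < ⋯ < t_ℓ be distinct real numbers. Then for every M ≥ 0: inf over x ∈ [−M, M] of ( inf over (α,β) ∈ ℝ² of ∑_{i=1}^ℓ |f_{α,β}(x + t_i)|² ) > 0. -/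
lemma aux_strict (c β : ℝ) (hc : 0 < c) (hβ : β ≠ 0) :
    StrictConvexOn ℝ Set.univ (fun y : ℝ => c * Real.exp (β * y)) := by
  refine ⟨convex_univ, fun x _ y _ hxy a b ha hb hab => ?_⟩
  have h := strictConvexOn_exp.2 (Set.mem_univ (β * x)) (Set.mem_univ (β * y))
    (fun h => hxy (mul_left_cancel₀ hβ h)) ha hb hab
  have h2 : Real.exp (β * (a * x + b * y)) < a * Real.exp (β * x) + b * Real.exp (β * y) := by
    rw [mul_add, mul_left_comm, mul_left_comm β b]
    simpa [smul_eq_mul] using h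
  have := mul_lt_mul_of_pos_left h2 hc
  simp only [smul_eq_mul]
  nlinarith [this]

lemma aux_convex (c β : ℝ) (hc : 0 ≤ c) :
    ConvexOn ℝ Set.univ (fun y : ℝ => c * Real.exp (β * y)) := by
  refine ⟨convex_univ, fun x _ y _ a b ha hb hab => ?_⟩
  have h := convexOn_exp.2 (Set.mem_univ (β * x)) (Set.mem_univ (β * y)) ha hb hab
  have h2 : Real.exp (β * (a * x + b * y)) ≤ a * Real.exp (β * x) + b * Real.exp (β * y) := by
    rw [mul_add, mul_left_comm, mul_left_comm β b]
    simpa [smul_eq_mul] using h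
  have := mul_le_mul_of_nonneg_left h2 hc
  simp only [smul_eq_mul]
  nlinarith [this]

lemma aux_sum_convex {ι : Type*} (s : Finset ι) (g : ι → ℝ → ℝ)
    (h : ∀ i ∈ s, ConvexOn ℝ Set.univ (g i)) :
    ConvexOn ℝ Set.univ (fun y => ∑ i ∈ s, g i y) := by
  classical
  induction s using Finset.induction with
  | empty => simpa using convexOn_const 0 convex_univ
  | @insert i s hx ih =>
      simp only [Finset.sum_insert hx]
      exact (h i (Finset.mem_insert_self i s)).add
        (ih fun j hj => h j (Finset.mem_insert_of_mem hj))

/-- The log-sum-exp-shifted sum `∑ γ_q exp((α_q − r) y)` is strictly convex. -/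
lemma aux_phi_strict {k : ℕ} (hk : 2 ≤ k) (γ αs : Fin k → ℝ)
    (hγ : ∀ q, 0 < γ q) (hαs : StrictAnti αs) (r : ℝ) :
    StrictConvexOn ℝ Set.univ (fun y => ∑ q, γ q * Real.exp ((αs q - r) * y)) := by
  classical
  have h0 : (0 : ℕ) < k := by omega
  have h1 : (1 : ℕ) < k := by omega
  obtain ⟨q₀, hq₀⟩ : ∃ q₀ : Fin k, αs q₀ - r ≠ 0 := by
    by_cases h : αs ⟨0, h0⟩ - r = 0
    · refine ⟨⟨1, h1⟩, ?_⟩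
      have : αs ⟨1, h1⟩ < αs ⟨0, h0⟩ := hαs (by simp [Fin.lt_def])
      intro hc
      rw [sub_eq_zero] at h hc
      rw [h, hc] at this
      exact lt_irrefl _ this
    · exact ⟨⟨0, h0⟩, h⟩
  have hrest : ConvexOn ℝ Set.univ
      (fun y => ∑ q ∈ Finset.univ.erase q₀, γ q * Real.exp ((αs q - r) * y)) :=
    aux_sum_convex _ _ fun i _ => aux_convex _ _ (hγ i).le
  have hmain : StrictConvexOn ℝ Set.univ
      (fun y => γ q₀ * Real.exp ((αs q₀ - r) * y)) := aux_strict _ _ (hγ q₀) hq₀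
  have := hrest.add_strictConvexOn hmain
  have heq : (fun y => ∑ q, γ q * Real.exp ((αs q - r) * y)) =
      ((fun y => ∑ q ∈ Finset.univ.erase q₀, γ q * Real.exp ((αs q - r) * y)) + fun y =>
        γ q₀ * Real.exp ((αs q₀ - r) * y)) := by
    funext y
    simp only [Pi.add_apply]
    rw [Finset.sum_erase_add _ _ (Finset.mem_univ q₀)]
  rw [heq]
  exact this

lemma aux_no_three {φ : ℝ → ℝ} (hφ : StrictConvexOn ℝ Set.univ φ)
    {x₁ x₂ x₃ v : ℝ} (h12 : x₁ < x₂) (h23 : x₂ < x₃)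
    (hv1 : φ x₁ = v) (hv2 : φ x₂ = v) (hv3 : φ x₃ = v) : False := by
  set θ : ℝ := (x₃ - x₂) / (x₃ - x₁) with hθdef
  have h13 : x₁ < x₃ := h12.trans h23
  have hd : (0:ℝ) < x₃ - x₁ := by linarith
  have hθpos : 0 < θ := div_pos (by linarith) hd
  have hθlt : θ < 1 := (div_lt_one hd).2 (by linarith)
  have hcomb : θ * x₁ + (1 - θ) * x₃ = x₂ := by
    rw [hθdef]
    field_simp
    ring
  have h : φ (θ • x₁ + (1 - θ) • x₃) < θ • φ x₁ + (1 - θ) • φ x₃ :=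
    hφ.2 (Set.mem_univ x₁) (Set.mem_univ x₃) h13.ne hθpos (by linarith) (by ring)
  simp only [smul_eq_mul] at h
  rw [hcomb, hv1, hv2, hv3] at h
  nlinarith [h]

theorem stmt_4 {k : ℕ} (hk : 2 ≤ k) (γ αs : Fin k → ℝ)
    (hγ : ∀ q, 0 < γ q) (hαs : StrictAnti αs)
    {ℓ : ℕ} (hℓ : 3 ≤ ℓ) (t : Fin ℓ → ℝ) (ht : StrictMono t)
    (M : ℝ) (hM : 0 ≤ M) :
    ∃ c : ℝ, 0 < c ∧ ∀ x ∈ Set.Icc (-M) M, ∀ a b : ℝ,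
      c ≤ ∑ i, (f γ αs a b (x + t i)) ^ 2 := by
  classical
  have hkpos : (0:ℕ) < k := by omega
  have hne : (Finset.univ : Finset (Fin k)).Nonempty := ⟨⟨0, hkpos⟩, Finset.mem_univ _⟩
  set S : ℝ → ℝ := fun y => ∑ q, γ q * Real.exp (αs q * y) with hS
  have hSpos : ∀ y, 0 < S y := fun y =>
    Finset.sum_pos (fun q _ => mul_pos (hγ q) (Real.exp_pos _)) hne
  set g : ℝ → ℝ := fun y => Real.log (S y) with hg
  have hgcont : Continuous g := by
    apply Continuous.log
    · exact continuous_finset_sum _ fun q _ =>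
        continuous_const.mul ((continuous_const.mul continuous_id).rexp)
    · exact fun y => (hSpos y).ne'
  -- Euclidean space setup
  set u : EuclideanSpace ℝ (Fin ℓ) := WithLp.toLp 2 (fun _ => 1) with hu
  set w : EuclideanSpace ℝ (Fin ℓ) := WithLp.toLp 2 (fun i => t i) with hw
  set W : Submodule ℝ (EuclideanSpace ℝ (Fin ℓ)) := Submodule.span ℝ {u, w} with hW
  have hWclosed : IsClosed (W : Set (EuclideanSpace ℝ (Fin ℓ))) :=
    Submodule.closed_of_finiteDimensional W
  set v : ℝ → EuclideanSpace ℝ (Fin ℓ) := fun x => WithLp.toLp 2 (fun i => g (x + t i)) with hv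
  have hvcont : Continuous v := by
    refine (PiLp.continuous_toLp 2 _).comp ?_
    apply continuous_pi
    intro i
    exact hgcont.comp (continuous_id.add continuous_const)
  set D : ℝ → ℝ := fun x => Metric.infDist (v x) (W : Set (EuclideanSpace ℝ (Fin ℓ))) with hD
  have hDcont : Continuous D := (Metric.continuous_infDist_pt _).comp hvcont
  have hKne : (Set.Icc (-M) M).Nonempty := ⟨0, by constructor <;> linarith⟩
  obtain ⟨x₀, hx₀K, hmin⟩ := isCompact_Icc.exists_isMinOn hKne hDcont.continuousOn
  have hDpos : 0 < D x₀ := by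
    rw [hD]
    rw [← hWclosed.notMem_iff_infDist_pos ⟨0, W.zero_mem⟩]
    intro hmem
    obtain ⟨a, b, hab⟩ := Submodule.mem_span_pair.1 (by simpa [hW] using hmem)
    -- g (x₀ + t i) = a + b * t i for all i
    have hval : ∀ i : Fin ℓ, g (x₀ + t i) = a + b * t i := by
      intro i
      have := congrArg (fun z : EuclideanSpace ℝ (Fin ℓ) => z i) hab
      simp only [hv] at this ⊢
      have h2 : a * u i + b * w i = v x₀ i := by
        simpa using congrArg (fun z : EuclideanSpace ℝ (Fin ℓ) => z i) hab
      simp only [hu, hw, hv] at h2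
      linarith [h2]
    -- therefore S (x₀ + t i) = exp (b * (x₀ + t i) + s) with s := a - b * x₀
    set s : ℝ := a - b * x₀ with hs
    set φ : ℝ → ℝ := fun y => ∑ q, γ q * Real.exp ((αs q - b) * y) with hφ
    have hφval : ∀ i : Fin ℓ, φ (x₀ + t i) = Real.exp s := by
      intro i
      have hSval : S (x₀ + t i) = Real.exp (b * (x₀ + t i) + s) := by
        have := hval i
        rw [hg] at this
        have := congrArg Real.exp this
        rw [Real.exp_log (hSpos _)] at this
        rw [this]
        congr 1
        rw [hs]; ring
      have hkey : φ (x₀ + t i) = S (x₀ + t i) * Real.exp (-(b * (x₀ + t i))) := by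
        simp only [hφ, hS, Finset.sum_mul]
        apply Finset.sum_congr rfl
        intro q _
        have hexp : (αs q - b) * (x₀ + t i)
            = αs q * (x₀ + t i) + -(b * (x₀ + t i)) := by ring
        rw [hexp, Real.exp_add, mul_assoc]
      rw [hkey, hSval, ← Real.exp_add]
      congr 1
      ring
    have hstrict := aux_phi_strict hk γ αs hγ hαs b
    have h0 : (0:ℕ) < ℓ := by omega
    have h1 : (1:ℕ) < ℓ := by omega
    have h2 : (2:ℕ) < ℓ := by omega
    refine aux_no_three hstrict (x₁ := x₀ + t ⟨0, h0⟩) (x₂ := x₀ + t ⟨1, h1⟩)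
      (x₃ := x₀ + t ⟨2, h2⟩) ?_ ?_ (hφval _) (hφval _) (hφval _)
    · have := ht (show (⟨0, h0⟩ : Fin ℓ) < ⟨1, h1⟩ by simp [Fin.lt_def])
      linarith
    · have := ht (show (⟨1, h1⟩ : Fin ℓ) < ⟨2, h2⟩ by simp [Fin.lt_def])
      linarith
  refine ⟨D x₀ ^ 2, pow_pos hDpos 2, ?_⟩
  intro x hx a b
  set p : EuclideanSpace ℝ (Fin ℓ) := (a * x + b) • u + a • w with hp
  have hpW : p ∈ W := by
    rw [hW]
    exact Submodule.add_mem _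
      (Submodule.smul_mem _ _ (Submodule.subset_span (by simp)))
      (Submodule.smul_mem _ _ (Submodule.subset_span (by simp)))
  have hle1 : D x₀ ≤ D x := hmin hx
  have hle2 : D x ≤ dist (v x) p := Metric.infDist_le_dist_of_mem hpW
  have hnorm : dist (v x) p ^ 2 = ∑ i, (f γ αs a b (x + t i)) ^ 2 := by
    rw [dist_eq_norm, EuclideanSpace.norm_eq, Real.sq_sqrt
      (Finset.sum_nonneg fun i _ => sq_nonneg _)]
    congr 1
    funext i
    have hsub : (v x - p) i = v x i - p i := rfl
    rw [hsub]
    have hpi : p i = (a * x + b) * 1 + a * t i := rfl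
    have heq : v x i - p i = -(f γ αs a b (x + t i)) := by
      simp only [hv, hpi, f, hg, hS]
      ring
    rw [heq, norm_neg, Real.norm_eq_abs, sq_abs]
  rw [← hnorm]
  have hd0 : 0 ≤ D x₀ := hDpos.le
  calc D x₀ ^ 2 ≤ (dist (v x) p) ^ 2 := by
        apply pow_le_pow_left₀ hd0 (hle1.trans hle2)
    _ = _ := rfl
end
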